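/- arXiv:2203.02709 — 5 statements merged into one kernel-verified Lean document; each statement's English description precedes it below -/
import Mathlib

section
/- For any ε > 0, if the subsample size satisfies n_s ≥ α_0 log(ε/K), where α_0 = (log(n − n_min) − log n)^{-1}, then the event e* (every one of the K latent clusters has at least one merchant in the subsample) happens with probability at least 1 − ε. -/
open Finset

/-- Probability, under simple random sampling without replacement of a size-`ns` subset of
the `n` merchants (uniform over all such subsets), of an event `E` about the sampled set. -/
noncomputable def srsProb (n ns : ℕ) (E : Finset (Fin n) → Prop) : ℝ :=
  ((@Finset.filter _ (fun s => E s) (Classical.decPred _)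
      (Finset.powersetCard ns (Finset.univ : Finset (Fin n)))).card : ℝ) /
    ((Finset.powersetCard ns (Finset.univ : Finset (Fin n))).card : ℝ)

/-- Size of cluster `k` among the `n` merchants with labels `γ`. -/
noncomputable def clusterSize {n K : ℕ} (γ : Fin n → Fin K) (k : Fin K) : ℕ :=
  (Finset.univ.filter fun i => γ i = k).card

/-- Minimal cluster size `n_min = min_k n*_k`. -/
noncomputable def nMin {n K : ℕ} (γ : Fin n → Fin K) : ℕ := ⨅ k, clusterSize γ k

/-!
Union bound over the clusters: the subsample misses cluster `k` exactly when it lies in the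
complement of that cluster, which has at most `n - n_min` elements, so this happens with
probability at most `C(n - n_min, n_s) / C(n, n_s) ≤ (1 - n_min / n) ^ n_s`. Summing over the
`K` clusters, `e*` fails with probability at most `K (1 - n_min / n) ^ n_s`, and the size condition
is exactly `(1 - n_min / n) ^ n_s ≤ ε / K` after taking logarithms.
-/

-- Each factor `(m - i) / (n - i)` of `C(m, s) / C(n, s)` is at most `m / n`.
theorem Nat.pow_mul_choose_le_pow_mul_choose {m n : ℕ} (h : m ≤ n) (s : ℕ) :
    n ^ s * m.choose s ≤ m ^ s * n.choose s := by
  induction s with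
  | zero => simp
  | succ s ih =>
    have step : n * (m - s) ≤ m * (n - s) := by
      rcases le_or_gt m s with hs | hs
      · simp [Nat.sub_eq_zero_of_le hs]
      · zify [hs.le, hs.le.trans h]
        nlinarith
    refine Nat.le_of_mul_le_mul_right ?_ s.succ_pos
    calc n ^ (s + 1) * m.choose (s + 1) * (s + 1)
        = n * (m - s) * (n ^ s * m.choose s) := by
          rw [mul_assoc, Nat.choose_succ_right_eq]; ring
      _ ≤ m * (n - s) * (m ^ s * n.choose s) := Nat.mul_le_mul step ih
      _ = m ^ (s + 1) * n.choose (s + 1) * (s + 1) := by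
          rw [mul_assoc _ (n.choose _), Nat.choose_succ_right_eq]; ring

theorem Nat.choose_div_choose_le_pow {m n : ℕ} (h : m ≤ n) (s : ℕ) :
    (m.choose s : ℝ) / n.choose s ≤ ((m : ℝ) / n) ^ s := by
  rcases (n.choose s).eq_zero_or_pos with h0 | hpos
  · rw [h0, Nat.cast_zero, div_zero]
    positivity
  rw [div_pow, div_le_div_iff₀ (by exact_mod_cast hpos)
    (by exact_mod_cast hpos.trans_le (Nat.choose_le_pow n s))]
  exact_mod_cast (Nat.pow_mul_choose_le_pow_mul_choose h s).trans_eq' (mul_comm _ _)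

theorem pow_le_of_inv_log_mul_le {r c : ℝ} (hr₀ : 0 < r) (hr₁ : r < 1) (hc : 0 < c) {N : ℕ}
    (h : (Real.log r)⁻¹ * Real.log c ≤ N) : r ^ N ≤ c := by
  rw [← Real.log_le_log_iff (pow_pos hr₀ N) hc, Real.log_pow]
  rwa [inv_mul_eq_div, div_le_iff_of_neg (Real.log_neg hr₀ hr₁)] at h

section srsProb

variable {n ns : ℕ}

theorem srsProb_eq_card_div (E : Finset (Fin n) → Prop) [DecidablePred E] :
    srsProb n ns E = #{s ∈ powersetCard ns univ | E s} / n.choose ns := by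
  simp only [srsProb, card_powersetCard, card_univ, Fintype.card_fin]
  congr

theorem srsProb_mono {E F : Finset (Fin n) → Prop} (h : ∀ s, E s → F s) :
    srsProb n ns E ≤ srsProb n ns F := by
  classical
  rw [srsProb_eq_card_div, srsProb_eq_card_div]
  gcongr
  exact h _

theorem srsProb_exists_le {ι : Type*} [Fintype ι] (E : ι → Finset (Fin n) → Prop) :
    srsProb n ns (fun s => ∃ i, E i s) ≤ ∑ i, srsProb n ns (E i) := by
  classical
  simp only [srsProb_eq_card_div, ← sum_div]
  gcongr
  calc (#{s ∈ powersetCard ns univ | ∃ i, E i s} : ℝ)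
      ≤ #(univ.biUnion fun i => {s ∈ powersetCard ns univ | E i s}) := by
        gcongr
        intro s
        simp
    _ ≤ ∑ i, (#{s ∈ powersetCard ns univ | E i s} : ℝ) := by exact_mod_cast card_biUnion_le

theorem srsProb_not (hns : ns ≤ n) (E : Finset (Fin n) → Prop) :
    srsProb n ns (fun s => ¬ E s) = 1 - srsProb n ns E := by
  classical
  have hpos : (0 : ℝ) < n.choose ns := mod_cast Nat.choose_pos hns
  rw [srsProb_eq_card_div, srsProb_eq_card_div, eq_sub_iff_add_eq, ← add_div, div_eq_one_iff_eq hpos.ne']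
  have := card_filter_add_card_filter_not (s := powersetCard ns (univ : Finset (Fin n))) (p := E)
  rw [card_powersetCard, card_univ, Fintype.card_fin] at this
  exact_mod_cast (add_comm _ _).trans this

theorem srsProb_subset (A : Finset (Fin n)) :
    srsProb n ns (· ⊆ A) = ((#A).choose ns : ℝ) / n.choose ns := by
  classical
  rw [srsProb_eq_card_div, ← card_powersetCard]
  congr 3
  ext s
  simp only [mem_filter, mem_powersetCard, subset_univ, true_and]
  tauto

theorem srsProb_disjoint_le (C : Finset (Fin n)) :
    srsProb n ns (Disjoint · C) ≤ (((n - #C : ℕ) : ℝ) / n) ^ ns := by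
  simp_rw [← subset_compl_iff_disjoint_right]
  rw [srsProb_subset, card_compl, Fintype.card_fin]
  exact Nat.choose_div_choose_le_pow (Nat.sub_le n _) ns

end srsProb

section clusters

variable {n K : ℕ}

theorem nMin_le_clusterSize (γ : Fin n → Fin K) (k : Fin K) : nMin γ ≤ clusterSize γ k :=
  ciInf_le (OrderBot.bddBelow _) k

theorem nMin_pos [Nonempty (Fin K)] {γ : Fin n → Fin K} (hsurj : Function.Surjective γ) :
    0 < nMin γ :=
  show 1 ≤ ⨅ k, clusterSize γ k from le_ciInf fun k =>
    (hsurj k).elim fun i hi => card_pos.2 ⟨i, by simp [hi]⟩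

theorem srsProb_not_cover_le (ns : ℕ) (γ : Fin n → Fin K) :
    srsProb n ns (fun s => ¬ ∀ k, ∃ i ∈ s, γ i = k) ≤
      K * (((n - nMin γ : ℕ) : ℝ) / n) ^ ns := by
  calc _ ≤ srsProb n ns (fun s => ∃ k, Disjoint s (univ.filter fun i => γ i = k)) :=
        srsProb_mono fun s hs => by
          push Not at hs
          obtain ⟨k, hk⟩ := hs
          exact ⟨k, disjoint_left.2 fun i hi => by simpa using hk i hi⟩
    _ ≤ ∑ k, srsProb n ns (Disjoint · (univ.filter fun i => γ i = k)) := srsProb_exists_le _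
    _ ≤ ∑ _k : Fin K, (((n - nMin γ : ℕ) : ℝ) / n) ^ ns := sum_le_sum fun k _ =>
        (srsProb_disjoint_le _).trans <| by
          gcongr
          exact nMin_le_clusterSize γ k
    _ = _ := by simp

end clusters

theorem srs_cover_prob_of_size_general {n K ns : ℕ} (hns : ns ≤ n)
    (γ : Fin n → Fin K) (hsurj : Function.Surjective γ)
    (hmin : nMin γ < n)
    (ε : ℝ) (hε : 0 < ε)
    (hsize : (Real.log ((n : ℝ) - (nMin γ : ℝ)) - Real.log (n : ℝ))⁻¹ *
        Real.log (ε / (K : ℝ)) ≤ (ns : ℝ)) :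
    1 - ε ≤ srsProb n ns (fun s => ∀ k : Fin K, ∃ i ∈ s, γ i = k) := by
  have hn : 0 < n := by omega
  have : Nonempty (Fin K) := ⟨γ ⟨0, hn⟩⟩
  have hK : (0 : ℝ) < K := mod_cast Fin.pos (γ ⟨0, hn⟩)
  have hnR : (0 : ℝ) < n := mod_cast hn
  set r : ℝ := ((n - nMin γ : ℕ) : ℝ) / n
  have hgap : (0 : ℝ) < (n - nMin γ : ℕ) := mod_cast Nat.sub_pos_of_lt hmin
  have hr₀ : 0 < r := div_pos hgap hnR
  have hr₁ : r < 1 := (div_lt_one hnR).2 (mod_cast Nat.sub_lt hn (nMin_pos hsurj))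
  have hlog : Real.log r = Real.log ((n : ℝ) - nMin γ) - Real.log n := by
    rw [Real.log_div hgap.ne' hnR.ne', Nat.cast_sub hmin.le]
  have hpow : r ^ ns ≤ ε / K := pow_le_of_inv_log_mul_le hr₀ hr₁ (by positivity) (hlog ▸ hsize)
  have hbad := srsProb_not_cover_le ns γ
  rw [srsProb_not hns] at hbad
  have hKr : K * r ^ ns ≤ ε := (le_div_iff₀' hK).1 hpow
  linarith

/-- for any `ε > 0`, if the subsample size satisfies
`n_s ≥ α₀ log(ε/K)` with `α₀ = (log(n − n_min) − log n)⁻¹`, then the event `e*`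
(every one of the `K` clusters has at least one merchant in the subsample) happens
with probability at least `1 − ε` under simple random sampling without replacement. -/
theorem srs_cover_prob_of_size {n K ns : ℕ} (hK : 0 < K) (hns : ns ≤ n)
    (γ : Fin n → Fin K) (hsurj : Function.Surjective γ)
    (hmin : nMin γ < n)
    (ε : ℝ) (hε : 0 < ε)
    (hsize : (Real.log ((n : ℝ) - (nMin γ : ℝ)) - Real.log (n : ℝ))⁻¹ *
        Real.log (ε / (K : ℝ)) ≤ (ns : ℝ)) :
    1 - ε ≤ srsProb n ns (fun s => ∀ k : Fin K, ∃ i ∈ s, γ i = k) :=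
  srs_cover_prob_of_size_general hns γ hsurj hmin ε hε hsize
end

section
/- Let W be a real random variable with 0 ≤ W ≤ 1 almost surely. Then Var(e^{-W}) ≤ E[W²] + Var(W). -/
/-!
Pointwise, `e^{-2w} ≤ 1 - 2w + 2w²` for `w ≥ 0` and `e^{-w} ≥ 1 - w`. Integrating, with
`m = E[W] ∈ [0, 1]` and `s = E[W²]`, gives `E[e^{-2W}] ≤ 1 - 2m + 2s` and `E[e^{-W}] ≥ 1 - m ≥ 0`,
hence `Var(e^{-W}) ≤ 1 - 2m + 2s - (1 - m)² = s + (s - m²) = E[W²] + Var(W)`.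
-/

open MeasureTheory ProbabilityTheory

namespace Real

/-- From `e^x ≥ 1 + x + x²/2`, since `(1 + x + x²/2)(1 - x + x²/2) = 1 + x⁴/4 ≥ 1`. -/
lemma exp_neg_le_one_sub_add_sq_div_two {x : ℝ} (hx : 0 ≤ x) :
    exp (-x) ≤ 1 - x + x ^ 2 / 2 := by
  have hquad := quadratic_le_exp_of_nonneg hx
  have hinv : exp (-x) * exp x = 1 := by rw [← exp_add, neg_add_cancel, exp_zero]
  nlinarith [exp_pos x, exp_pos (-x)]

lemma exp_neg_sq_le {x : ℝ} (hx : 0 ≤ x) : exp (-x) ^ 2 ≤ 1 - 2 * x + 2 * x ^ 2 := by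
  have h := exp_neg_le_one_sub_add_sq_div_two (mul_nonneg zero_le_two hx)
  rw [← exp_nat_mul]
  convert h using 2 <;> push_cast <;> ring

end Real

section

variable {Ω : Type*} [MeasurableSpace Ω] {μ : Measure Ω} [IsProbabilityMeasure μ] {W : Ω → ℝ}

lemma one_sub_integral_le_integral_exp_neg (hW : Integrable W μ)
    (hexp : Integrable (fun ω => Real.exp (-W ω)) μ) :
    1 - ∫ ω, W ω ∂μ ≤ ∫ ω, Real.exp (-W ω) ∂μ :=
  calc 1 - ∫ ω, W ω ∂μ = ∫ ω, (1 - W ω) ∂μ := by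
        rw [integral_sub (integrable_const 1) hW, integral_const, probReal_univ, one_smul]
    _ ≤ ∫ ω, Real.exp (-W ω) ∂μ :=
        integral_mono ((integrable_const 1).sub hW) hexp fun ω => Real.one_sub_le_exp_neg _

lemma integral_exp_neg_sq_le (hW : MemLp W 2 μ) (hexp : Integrable (fun ω => Real.exp (-W ω) ^ 2) μ)
    (hW0 : 0 ≤ᵐ[μ] W) :
    ∫ ω, Real.exp (-W ω) ^ 2 ∂μ ≤ 1 - 2 * ∫ ω, W ω ∂μ + 2 * ∫ ω, W ω ^ 2 ∂μ := by
  have hW1 : Integrable (fun ω => 1 - 2 * W ω) μ :=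
    (integrable_const 1).sub ((hW.integrable one_le_two).const_mul 2)
  have hW2 : Integrable (fun ω => 2 * W ω ^ 2) μ := hW.integrable_sq.const_mul 2
  calc ∫ ω, Real.exp (-W ω) ^ 2 ∂μ ≤ ∫ ω, (1 - 2 * W ω + 2 * W ω ^ 2) ∂μ :=
        integral_mono_ae hexp (hW1.add hW2) (hW0.mono fun ω hω => Real.exp_neg_sq_le hω)
    _ = 1 - 2 * ∫ ω, W ω ∂μ + 2 * ∫ ω, W ω ^ 2 ∂μ := by
        rw [integral_add hW1 hW2, integral_sub (integrable_const 1)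
          ((hW.integrable one_le_two).const_mul 2), integral_const_mul, integral_const_mul,
          integral_const, probReal_univ, one_smul]

end

/-- if `W` is a real random variable with `0 ≤ W ≤ 1` almost surely, then
`Var(e^{-W}) ≤ E[W²] + Var(W)`. -/
theorem variance_exp_neg_le (Ω : Type*) [MeasurableSpace Ω] (μ : Measure Ω)
    [IsProbabilityMeasure μ] (W : Ω → ℝ) (hW : Measurable W)
    (hrange : ∀ᵐ ω ∂μ, W ω ∈ Set.Icc (0 : ℝ) 1) :
    variance (fun ω => Real.exp (-(W ω))) μ ≤ (∫ ω, (W ω) ^ 2 ∂μ) + variance W μ := by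
  have hWLp : MemLp W 2 μ := MemLp.of_bound hW.aestronglyMeasurable 1 <| by
    filter_upwards [hrange] with ω hω
    rw [Real.norm_of_nonneg hω.1]
    exact hω.2
  have hexpLp : MemLp (fun ω => Real.exp (-W ω)) 2 μ :=
    MemLp.of_bound hW.neg.exp.aestronglyMeasurable 1 <| by
      filter_upwards [hrange] with ω hω
      rw [Real.norm_of_nonneg (Real.exp_pos _).le, Real.exp_le_one_iff, neg_nonpos]
      exact hω.1
  have hmean_le_one : ∫ ω, W ω ∂μ ≤ 1 := by
    simpa using integral_mono_ae (hWLp.integrable one_le_two) (integrable_const 1)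
      (hrange.mono fun _ hω => hω.2)
  have hlower := one_sub_integral_le_integral_exp_neg (hWLp.integrable one_le_two)
    (hexpLp.integrable one_le_two)
  have hupper := integral_exp_neg_sq_le hWLp hexpLp.integrable_sq (hrange.mono fun _ hω => hω.1)
  rw [variance_eq_sub hexpLp, variance_eq_sub hWLp]
  simp only [Pi.pow_apply]
  nlinarith [pow_le_pow_left₀ (sub_nonneg.2 hmean_le_one) hlower 2]
end

section
/- Let S ∈ ℝ^{n×n} be a symmetric matrix with nonnegative entries, and let D, D* ∈ ℝ^{n×n} be diagonal matrices with strictly positive diagonal entries d_1,…,d_n and d*_1,…,d*_n. Set L = D^{-1/2} S D^{-1/2} and L̃ = (D*)^{-1/2} S (D*)^{-1/2}. If the spectral norm of L satisfies ‖L‖ ≤ 1 and max_{1≤i≤n} |d_i/d*_i − 1| ≤ b for some b ≥ 0, then ‖L − L̃‖ ≤ b² + 2b (spectral norm). -/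
open Matrix

/-- The spectral norm (ℓ²→ℓ² operator norm) of a real square matrix. -/
noncomputable def specNorm {n : ℕ} (A : Matrix (Fin n) (Fin n) ℝ) : ℝ :=
  ‖LinearMap.toContinuousLinearMap (Matrix.toEuclideanLin A)‖

/-!
With `E = diag(√(dᵢ/d*ᵢ))` one has `L̃ = E L E` and `L - E L E = L (1 - E) + (1 - E) L E`.
As `E` is diagonal, `‖1 - E‖ = maxᵢ |√(dᵢ/d*ᵢ) - 1| ≤ maxᵢ |dᵢ/d*ᵢ - 1| ≤ b` and `‖E‖ ≤ 1 + b`,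
so `‖L - L̃‖ ≤ b + b (1 + b)`.
-/

open scoped Matrix.Norms.L2Operator

theorem specNorm_eq_l2_opNorm {n : ℕ} (A : Matrix (Fin n) (Fin n) ℝ) : specNorm A = ‖A‖ := rfl

theorem Real.abs_sqrt_sub_one_le {r : ℝ} (hr : 0 ≤ r) : |√r - 1| ≤ |r - 1| := by
  have hfactor : r - 1 = (√r - 1) * (√r + 1) := by
    rw [mul_comm, ← mul_self_sub_one, Real.mul_self_sqrt hr]
  rw [hfactor, abs_mul]
  refine le_mul_of_one_le_right (abs_nonneg _) ?_
  rw [abs_of_nonneg (by positivity)]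
  linarith [Real.sqrt_nonneg r]

theorem Matrix.l2_opNorm_diagonal_le {m 𝕜 : Type*} [RCLike 𝕜] [Fintype m] [DecidableEq m]
    {v : m → 𝕜} {c : ℝ} (hc : 0 ≤ c) (hv : ∀ i, ‖v i‖ ≤ c) :
    ‖(diagonal v : Matrix m m 𝕜)‖ ≤ c := by
  rw [l2_opNorm_diagonal]
  exact (pi_norm_le_iff_of_nonneg hc).2 hv

theorem norm_sub_mul_mul_le {R : Type*} [NormedRing R] {L E : R} {b : ℝ}
    (hL : ‖L‖ ≤ 1) (hE₁ : ‖1 - E‖ ≤ b) (hE : ‖E‖ ≤ 1 + b) :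
    ‖L - E * L * E‖ ≤ b ^ 2 + 2 * b := by
  have hb : 0 ≤ b := (norm_nonneg _).trans hE₁
  calc ‖L - E * L * E‖ = ‖L * (1 - E) + (1 - E) * (L * E)‖ := by noncomm_ring
    _ ≤ ‖L‖ * ‖1 - E‖ + ‖1 - E‖ * (‖L‖ * ‖E‖) :=
      norm_add_le_of_le (norm_mul_le _ _)
        ((norm_mul_le _ _).trans (by gcongr; exact norm_mul_le _ _))
    _ ≤ 1 * b + b * (1 * (1 + b)) := by gcongr
    _ = b ^ 2 + 2 * b := by ring

theorem laplacian_perturbation_bound_general {n : ℕ}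
    (S : Matrix (Fin n) (Fin n) ℝ)
    (d dstar : Fin n → ℝ) (hd : ∀ i, 0 < d i) (hdstar : ∀ i, 0 < dstar i)
    (L Ltil : Matrix (Fin n) (Fin n) ℝ)
    (hL : L = Matrix.diagonal (fun i => (Real.sqrt (d i))⁻¹) * S *
      Matrix.diagonal (fun i => (Real.sqrt (d i))⁻¹))
    (hLtil : Ltil = Matrix.diagonal (fun i => (Real.sqrt (dstar i))⁻¹) * S *
      Matrix.diagonal (fun i => (Real.sqrt (dstar i))⁻¹))
    (hLnorm : specNorm L ≤ 1)
    (b : ℝ) (hb : 0 ≤ b) (hratio : ∀ i, |d i / dstar i - 1| ≤ b) :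
    specNorm (L - Ltil) ≤ b ^ 2 + 2 * b := by
  rw [specNorm_eq_l2_opNorm] at hLnorm ⊢
  set e : Fin n → ℝ := fun i => √(d i / dstar i)
  have hscale : ∀ i, e i * (√(d i))⁻¹ = (√(dstar i))⁻¹ := fun i => by
    have : √(d i) ≠ 0 := (Real.sqrt_pos.2 (hd i)).ne'
    simp only [e, Real.sqrt_div (hd i).le]
    field_simp
  have hconj : Ltil = diagonal e * L * diagonal e := by
    ext i j
    simp only [hL, hLtil, mul_diagonal, diagonal_mul, ← hscale i, ← hscale j]
    ring
  have hsub : ∀ i, |1 - e i| ≤ b := fun i => by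
    rw [abs_sub_comm]
    exact (Real.abs_sqrt_sub_one_le (div_pos (hd i) (hdstar i)).le).trans (hratio i)
  have hE₁ : ‖1 - diagonal e‖ ≤ b := by
    rw [← diagonal_one, diagonal_sub]
    exact l2_opNorm_diagonal_le hb hsub
  have hE : ‖diagonal e‖ ≤ 1 + b := l2_opNorm_diagonal_le (by linarith) fun i => by
    rw [Real.norm_of_nonneg (Real.sqrt_nonneg _)]
    linarith [(abs_le.1 (hsub i)).1]
  rw [hconj]
  exact norm_sub_mul_mul_le hLnorm hE₁ hE

/-- for a symmetric nonnegative `S` and positive diagonal matrices `D`, `D*`,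
with `L = D^{-1/2} S D^{-1/2}` and `L̃ = (D*)^{-1/2} S (D*)^{-1/2}`, if `‖L‖ ≤ 1` and
`max_i |d_i/d*_i − 1| ≤ b`, then `‖L − L̃‖ ≤ b² + 2b` in spectral norm. -/
theorem laplacian_perturbation_bound {n : ℕ}
    (S : Matrix (Fin n) (Fin n) ℝ) (hSsymm : S.IsSymm) (hSnonneg : ∀ i j, 0 ≤ S i j)
    (d dstar : Fin n → ℝ) (hd : ∀ i, 0 < d i) (hdstar : ∀ i, 0 < dstar i)
    (L Ltil : Matrix (Fin n) (Fin n) ℝ)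
    (hL : L = Matrix.diagonal (fun i => (Real.sqrt (d i))⁻¹) * S *
      Matrix.diagonal (fun i => (Real.sqrt (d i))⁻¹))
    (hLtil : Ltil = Matrix.diagonal (fun i => (Real.sqrt (dstar i))⁻¹) * S *
      Matrix.diagonal (fun i => (Real.sqrt (dstar i))⁻¹))
    (hLnorm : specNorm L ≤ 1)
    (b : ℝ) (hb : 0 ≤ b) (hratio : ∀ i, |d i / dstar i - 1| ≤ b) :
    specNorm (L - Ltil) ≤ b ^ 2 + 2 * b :=
  laplacian_perturbation_bound_general S d dstar hd hdstar L Ltil hL hLtil hLnorm b hb hratio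
end

section
/- Let G ∈ ℝ^{n×n} be diagonal with strictly positive entries g_1,…,g_n, let Z ∈ {0,1}^{n×K} be a membership matrix (each row has exactly one 1, each column nonzero) with cluster labels γ_i, and let V_0 ∈ ℝ^{K×K} be orthogonal. Define V = G Z (Z^T G² Z)^{-1/2} V_0 ∈ ℝ^{n×K} and g'_i = g_i². Then for any two indices i, j with γ_i ≠ γ_j, the rows of V satisfy ‖V_{i·} − V_{j·}‖ ≥ √( g'_i / Σ_{i': γ_{i'} = γ_i} g'_{i'} + g'_j / Σ_{i': γ_{i'} = γ_j} g'_{i'} ). -/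
open Matrix

/-! Row `a` of `V` is `g a / √S (γ a)` times row `γ a` of `V₀`, where `S c = Σ_{γ i' = c} g i'²`.
Rows of an orthogonal matrix are orthonormal, so for `γ i ≠ γ j` the squared distance between
rows `i` and `j` of `V` is exactly `g i² / S (γ i) + g j² / S (γ j)`. -/

def membershipMatrix {ι κ : Type*} [DecidableEq κ] (R : Type*) [Zero R] [One R] (γ : ι → κ) :
    Matrix ι κ R :=
  of fun i k => if γ i = k then 1 else 0

theorem membershipMatrix_mul_apply {ι κ μ R : Type*} [Fintype κ] [DecidableEq κ]
    [NonAssocSemiring R] (γ : ι → κ) (M : Matrix κ μ R) (i : ι) (k : μ) :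
    (membershipMatrix R γ * M) i k = M (γ i) k := by
  simp [membershipMatrix, mul_apply]

theorem diagonal_mul_membershipMatrix_mul_diagonal_mul_apply {ι κ μ R : Type*}
    [Fintype ι] [DecidableEq ι] [Fintype κ] [DecidableEq κ] [CommSemiring R]
    (g : ι → R) (γ : ι → κ) (d : κ → R) (M : Matrix κ μ R) (i : ι) (k : μ) :
    (diagonal g * membershipMatrix R γ * diagonal d * M) i k = g i * d (γ i) * M (γ i) k := by
  rw [Matrix.mul_assoc, Matrix.mul_assoc, diagonal_mul, membershipMatrix_mul_apply,
    diagonal_mul, mul_assoc]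

theorem dotProduct_rows_of_transpose_mul_self_eq_one {κ R : Type*} [Fintype κ] [DecidableEq κ]
    [CommRing R] {U : Matrix κ κ R} (hU : Uᵀ * U = 1) (c c' : κ) :
    U c ⬝ᵥ U c' = (1 : Matrix κ κ R) c c' := by
  rw [← mul_eq_one_comm.mp hU, mul_apply']
  rfl

theorem sum_sq_mul_sub_mul_of_orthonormal {κ R : Type*} [Fintype κ] [CommRing R] {u w : κ → R}
    (hu : u ⬝ᵥ u = 1) (hw : w ⬝ᵥ w = 1) (huw : u ⬝ᵥ w = 0) (a b : R) :
    ∑ k, (a * u k - b * w k) ^ 2 = a ^ 2 + b ^ 2 := by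
  have expand : ∑ k, (a * u k - b * w k) ^ 2
      = a ^ 2 * (u ⬝ᵥ u) - 2 * a * b * (u ⬝ᵥ w) + b ^ 2 * (w ⬝ᵥ w) := by
    simp only [dotProduct, Finset.mul_sum, ← Finset.sum_sub_distrib, ← Finset.sum_add_distrib]
    exact Finset.sum_congr rfl fun k _ => by ring
  rw [expand, hu, hw, huw]
  ring

theorem mul_inv_sqrt_sq {x s : ℝ} (hs : 0 ≤ s) : (x * (√s)⁻¹) ^ 2 = x ^ 2 / s := by
  rw [mul_pow, inv_pow, Real.sq_sqrt hs, div_eq_mul_inv]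

theorem eigvec_row_separation_general {n K : ℕ}
    (g : Fin n → ℝ)
    (γ : Fin n → Fin K)
    (Z : Matrix (Fin n) (Fin K) ℝ)
    (hZ : Z = Matrix.of fun i k => if γ i = k then (1 : ℝ) else 0)
    (V₀ : Matrix (Fin K) (Fin K) ℝ) (hV₀ : V₀ᵀ * V₀ = 1)
    (V : Matrix (Fin n) (Fin K) ℝ)
    (hV : V = Matrix.diagonal g * Z *
      Matrix.diagonal (fun k =>
        (Real.sqrt (∑ i ∈ Finset.univ.filter fun i' => γ i' = k, g i ^ 2))⁻¹) * V₀)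
    (i j : Fin n) (hij : γ i ≠ γ j) :
    Real.sqrt ((g i ^ 2) / (∑ i' ∈ Finset.univ.filter fun i' => γ i' = γ i, g i' ^ 2)
        + (g j ^ 2) / (∑ i' ∈ Finset.univ.filter fun i' => γ i' = γ j, g i' ^ 2))
      ≤ Real.sqrt (∑ k, (V i k - V j k) ^ 2) := by
  set S : Fin K → ℝ := fun c => ∑ i' ∈ Finset.univ.filter fun i' => γ i' = c, g i' ^ 2
  have hS : ∀ c, 0 ≤ S c := fun c => Finset.sum_nonneg fun _ _ => sq_nonneg _
  have hrow : ∀ a k, V a k = g a * (√(S (γ a)))⁻¹ * V₀ (γ a) k := fun a k => by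
    subst hV hZ
    exact diagonal_mul_membershipMatrix_mul_diagonal_mul_apply g γ _ V₀ a k
  have horth := dotProduct_rows_of_transpose_mul_self_eq_one hV₀
  have hdist : ∑ k, (V i k - V j k) ^ 2 = g i ^ 2 / S (γ i) + g j ^ 2 / S (γ j) := by
    simp only [hrow]
    rw [sum_sq_mul_sub_mul_of_orthonormal (by simp [horth]) (by simp [horth])
      (by simp [horth, one_apply_ne hij]), mul_inv_sqrt_sq (hS _), mul_inv_sqrt_sq (hS _)]
  rw [hdist]

/-- row separation for `V = G Z (Zᵀ G² Z)^{-1/2} V₀`, where `G` is a positive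
diagonal matrix, `Z` is the membership matrix of the cluster labels `γ`, and `V₀` is
orthogonal.  Here `Zᵀ G² Z` is the diagonal `K×K` matrix with `k`-th entry
`Σ_{i : γ i = k} g_i²`, so its inverse square root is the diagonal matrix with entries
`(√(Σ_{i : γ i = k} g_i²))⁻¹`.  For indices `i, j` in different clusters,
`‖V_{i·} − V_{j·}‖ ≥ √( g'_i / Σ_{γ i' = γ i} g'_{i'} + g'_j / Σ_{γ i' = γ j} g'_{i'} )`
with `g'_i = g_i²`. -/
theorem eigvec_row_separation {n K : ℕ}
    (g : Fin n → ℝ) (hg : ∀ i, 0 < g i)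
    (γ : Fin n → Fin K) (hsurj : Function.Surjective γ)
    (Z : Matrix (Fin n) (Fin K) ℝ)
    (hZ : Z = Matrix.of fun i k => if γ i = k then (1 : ℝ) else 0)
    (V₀ : Matrix (Fin K) (Fin K) ℝ) (hV₀ : V₀ᵀ * V₀ = 1)
    (V : Matrix (Fin n) (Fin K) ℝ)
    (hV : V = Matrix.diagonal g * Z *
      Matrix.diagonal (fun k =>
        (Real.sqrt (∑ i ∈ Finset.univ.filter fun i' => γ i' = k, g i ^ 2))⁻¹) * V₀)
    (i j : Fin n) (hij : γ i ≠ γ j) :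
    Real.sqrt ((g i ^ 2) / (∑ i' ∈ Finset.univ.filter fun i' => γ i' = γ i, g i' ^ 2)
        + (g j ^ 2) / (∑ i' ∈ Finset.univ.filter fun i' => γ i' = γ j, g i' ^ 2))
      ≤ Real.sqrt (∑ k, (V i k - V j k) ^ 2) :=
  eigvec_row_separation_general g γ Z hZ V₀ hV₀ V hV i j hij
end

section
/- Let F_i, F_j be CDFs of distributions on [0,1], let F̂_i, F̂_j be the ECDFs of independent i.i.d. samples of sizes v_i and v_j, and let S(i,j) = exp(−W(F̂_i, F̂_j)) with W(G,H) = ∫_0^1 |G − H|. Then |E[S(i,j)] − exp(−W(F_i, F_j))| ≤ E[W(F̂_i, F_i)] + E[W(F̂_j, F_j)] ≤ (2√v_i)^{-1} + (2√v_j)^{-1}; in particular, E[S(i,j)] → exp(−W(F_i, F_j)) as min(v_i, v_j) → ∞, and if F_i = F_j then E[S(i,j)] → 1. -/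
open MeasureTheory ProbabilityTheory Filter

/-- 1-Wasserstein distance between two CDFs of distributions on `[0,1]`:
`W(G, H) = ∫_0^1 |G(x) − H(x)| dx`. -/
noncomputable def wassCDF (G H : ℝ → ℝ) : ℝ := ∫ x in (0:ℝ)..1, |G x - H x|

/-- ECDF of the sample `X_0, …, X_{v-1}`. -/
noncomputable def ecdfSample {Ω : Type*} (v : ℕ) (X : Fin v → Ω → ℝ) (ω : Ω) (x : ℝ) : ℝ :=
  (∑ q, if X q ω ≤ x then (1 : ℝ) else 0) / (v : ℝ)

/-! `x ↦ exp (-x)` is 1-Lipschitz on `[0, ∞)` and `W` satisfies the triangle inequality, so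
pointwise `|S(i,j) − exp(−W(F_i,F_j))| ≤ W(F̂_i,F_i) + W(F̂_j,F_j)`; integrating gives the first
bound. For the second, Fubini turns `E[W(F̂,F)]` into `∫₀¹ E|F̂(x) − F(x)| dx`. At each `x`,
`F̂(x)` is the mean of `v` pairwise independent indicators with mean `F(x)`, so
`E|F̂(x) − F(x)| ≤ √Var F̂(x) ≤ √(1/(4v))` by Popoviciu's inequality. -/

open Set Function Real

lemma abs_exp_neg_sub_exp_neg_le {a b : ℝ} (ha : 0 ≤ a) (hb : 0 ≤ b) :
    |exp (-a) - exp (-b)| ≤ |a - b| := by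
  wlog hba : b ≤ a generalizing a b
  · rw [abs_sub_comm, abs_sub_comm a]
    exact this hb ha (le_of_not_ge hba)
  have hdecay : exp (-a) ≤ exp (-b) := exp_le_exp.2 (neg_le_neg hba)
  rw [abs_of_nonpos (sub_nonpos.2 hdecay), abs_of_nonneg (sub_nonneg.2 hba), neg_sub]
  calc exp (-b) - exp (-a) = exp (-b) * (1 - exp (-(a - b))) := by
        rw [mul_sub, ← exp_add]; ring_nf
    _ ≤ 1 - exp (-(a - b)) :=
        mul_le_of_le_one_left (sub_nonneg.2 (exp_le_one_iff.2 (by linarith)))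
          (exp_le_one_iff.2 (neg_nonpos.2 hb))
    _ ≤ a - b := by linarith [add_one_le_exp (-(a - b))]

lemma intervalIntegrable_of_mem_Icc {f : ℝ → ℝ} (hf : Measurable f)
    (hf01 : ∀ x, f x ∈ Icc (0 : ℝ) 1) (a b : ℝ) : IntervalIntegrable f volume a b :=
  (intervalIntegrable_const (c := (1 : ℝ))).mono_fun' hf.aestronglyMeasurable
    (ae_of_all _ fun x => by simpa [abs_of_nonneg (hf01 x).1] using (hf01 x).2)

section Wasserstein

lemma wassCDF_nonneg (G H : ℝ → ℝ) : 0 ≤ wassCDF G H :=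
  intervalIntegral.integral_nonneg zero_le_one fun _ _ => abs_nonneg _

lemma wassCDF_comm (G H : ℝ → ℝ) : wassCDF G H = wassCDF H G := by
  simp only [wassCDF, abs_sub_comm]

@[simp]
lemma wassCDF_self (G : ℝ → ℝ) : wassCDF G G = 0 := by
  simp [wassCDF]

lemma wassCDF_le_one {G H : ℝ → ℝ} (hG : ∀ x, G x ∈ Icc (0 : ℝ) 1)
    (hH : ∀ x, H x ∈ Icc (0 : ℝ) 1) : wassCDF G H ≤ 1 := by
  have := intervalIntegral.norm_integral_le_of_norm_le_const (a := 0) (b := 1)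
    (f := fun x => |G x - H x|) (C := 1) fun x _ => by
      simpa using abs_sub_le_of_nonneg_of_le (hG x).1 (hG x).2 (hH x).1 (hH x).2
  simp only [Real.norm_eq_abs, sub_zero, abs_one, mul_one] at this
  exact (le_abs_self _).trans this

lemma wassCDF_triangle {G H K : ℝ → ℝ} (hG : IntervalIntegrable G volume 0 1)
    (hH : IntervalIntegrable H volume 0 1) (hK : IntervalIntegrable K volume 0 1) :
    wassCDF G H ≤ wassCDF G K + wassCDF K H := by
  have hGK := (hG.sub hK).abs
  have hKH := (hK.sub hH).abs
  rw [wassCDF, wassCDF, wassCDF, ← intervalIntegral.integral_add hGK hKH]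
  exact intervalIntegral.integral_mono_on zero_le_one (hG.sub hH).abs (hGK.add hKH)
    fun x _ => by simpa using abs_sub_le (G x) (K x) (H x)

lemma abs_wassCDF_sub_wassCDF_le {G₁ G₂ F₁ F₂ : ℝ → ℝ}
    (hG₁ : IntervalIntegrable G₁ volume 0 1) (hG₂ : IntervalIntegrable G₂ volume 0 1)
    (hF₁ : IntervalIntegrable F₁ volume 0 1) (hF₂ : IntervalIntegrable F₂ volume 0 1) :
    |wassCDF G₁ G₂ - wassCDF F₁ F₂| ≤ wassCDF G₁ F₁ + wassCDF G₂ F₂ := by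
  have h₁ := wassCDF_triangle hG₁ hG₂ hF₁
  have h₂ := wassCDF_triangle hF₁ hG₂ hF₂
  have h₃ := wassCDF_triangle hF₁ hF₂ hG₁
  have h₄ := wassCDF_triangle hG₁ hF₂ hG₂
  rw [wassCDF_comm F₂ G₂] at h₂
  rw [wassCDF_comm F₁ G₁] at h₃
  exact abs_sub_le_iff.2 ⟨by linarith, by linarith⟩

end Wasserstein

section RandomCDF

variable {Ω : Type*} [MeasurableSpace Ω] {μ : Measure Ω}

lemma measurable_wassCDF {G H : Ω → ℝ → ℝ} (hG : Measurable (uncurry G))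
    (hH : Measurable (uncurry H)) : Measurable fun ω => wassCDF (G ω) (H ω) := by
  have hint : StronglyMeasurable (uncurry fun ω x => |G ω x - H ω x|) :=
    (hG.sub hH).abs.stronglyMeasurable
  simp_rw [wassCDF, intervalIntegral.integral_of_le zero_le_one]
  exact hint.integral_prod_right'.measurable

lemma integrable_wassCDF [IsFiniteMeasure μ] {G H : Ω → ℝ → ℝ} (hG : Measurable (uncurry G))
    (hH : Measurable (uncurry H)) (hG01 : ∀ ω x, G ω x ∈ Icc (0 : ℝ) 1)
    (hH01 : ∀ ω x, H ω x ∈ Icc (0 : ℝ) 1) :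
    Integrable (fun ω => wassCDF (G ω) (H ω)) μ :=
  .of_bound (measurable_wassCDF hG hH).aestronglyMeasurable 1 <| ae_of_all _ fun ω => by
    rw [Real.norm_eq_abs, abs_of_nonneg (wassCDF_nonneg _ _)]
    exact wassCDF_le_one (hG01 ω) (hH01 ω)

lemma integrable_exp_neg_wassCDF [IsFiniteMeasure μ] {G H : Ω → ℝ → ℝ}
    (hG : Measurable (uncurry G)) (hH : Measurable (uncurry H)) :
    Integrable (fun ω => exp (-wassCDF (G ω) (H ω))) μ :=
  .of_bound (measurable_wassCDF hG hH).neg.exp.aestronglyMeasurable 1 <| ae_of_all _ fun ω => by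
    rw [Real.norm_eq_abs, abs_of_pos (exp_pos _), exp_le_one_iff, neg_nonpos]
    exact wassCDF_nonneg _ _

lemma abs_integral_exp_neg_wassCDF_sub_le [IsProbabilityMeasure μ] {G₁ G₂ : Ω → ℝ → ℝ}
    {F₁ F₂ : ℝ → ℝ} (hG₁ : Measurable (uncurry G₁)) (hG₂ : Measurable (uncurry G₂))
    (hF₁ : Measurable F₁) (hF₂ : Measurable F₂) (hG₁01 : ∀ ω x, G₁ ω x ∈ Icc (0 : ℝ) 1)
    (hG₂01 : ∀ ω x, G₂ ω x ∈ Icc (0 : ℝ) 1) (hF₁01 : ∀ x, F₁ x ∈ Icc (0 : ℝ) 1)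
    (hF₂01 : ∀ x, F₂ x ∈ Icc (0 : ℝ) 1) :
    |∫ ω, exp (-wassCDF (G₁ ω) (G₂ ω)) ∂μ - exp (-wassCDF F₁ F₂)| ≤
      ∫ ω, wassCDF (G₁ ω) F₁ ∂μ + ∫ ω, wassCDF (G₂ ω) F₂ ∂μ := by
  have hF₁' : Measurable (uncurry fun (_ : Ω) => F₁) := hF₁.comp measurable_snd
  have hF₂' : Measurable (uncurry fun (_ : Ω) => F₂) := hF₂.comp measurable_snd
  have hpointwise : ∀ ω, |exp (-wassCDF (G₁ ω) (G₂ ω)) - exp (-wassCDF F₁ F₂)| ≤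
      wassCDF (G₁ ω) F₁ + wassCDF (G₂ ω) F₂ := fun ω =>
    (abs_exp_neg_sub_exp_neg_le (wassCDF_nonneg _ _) (wassCDF_nonneg _ _)).trans <|
      abs_wassCDF_sub_wassCDF_le
        (intervalIntegrable_of_mem_Icc hG₁.of_uncurry_left (hG₁01 ω) 0 1)
        (intervalIntegrable_of_mem_Icc hG₂.of_uncurry_left (hG₂01 ω) 0 1)
        (intervalIntegrable_of_mem_Icc hF₁ hF₁01 0 1) (intervalIntegrable_of_mem_Icc hF₂ hF₂01 0 1)
  have hS := integrable_exp_neg_wassCDF (μ := μ) hG₁ hG₂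
  have hA := integrable_wassCDF (μ := μ) hG₁ hF₁' hG₁01 fun _ => hF₁01
  have hB := integrable_wassCDF (μ := μ) hG₂ hF₂' hG₂01 fun _ => hF₂01
  calc |∫ ω, exp (-wassCDF (G₁ ω) (G₂ ω)) ∂μ - exp (-wassCDF F₁ F₂)|
      = |∫ ω, (exp (-wassCDF (G₁ ω) (G₂ ω)) - exp (-wassCDF F₁ F₂)) ∂μ| := by
        rw [integral_sub hS (integrable_const _), integral_const, probReal_univ, one_smul]
    _ ≤ ∫ ω, |exp (-wassCDF (G₁ ω) (G₂ ω)) - exp (-wassCDF F₁ F₂)| ∂μ :=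
        abs_integral_le_integral_abs
    _ ≤ ∫ ω, (wassCDF (G₁ ω) F₁ + wassCDF (G₂ ω) F₂) ∂μ :=
        integral_mono (hS.sub (integrable_const _)).abs (hA.add hB) hpointwise
    _ = ∫ ω, wassCDF (G₁ ω) F₁ ∂μ + ∫ ω, wassCDF (G₂ ω) F₂ ∂μ := integral_add hA hB

lemma integral_wassCDF_le [IsFiniteMeasure μ] {G : Ω → ℝ → ℝ} {F : ℝ → ℝ}
    (hG : Measurable (uncurry G)) (hF : Measurable F) (hG01 : ∀ ω x, G ω x ∈ Icc (0 : ℝ) 1)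
    (hF01 : ∀ x, F x ∈ Icc (0 : ℝ) 1) {c : ℝ} (hc : ∀ x, ∫ ω, |G ω x - F x| ∂μ ≤ c) :
    ∫ ω, wassCDF (G ω) F ∂μ ≤ c := by
  have : IsFiniteMeasure (volume.restrict (uIoc (0 : ℝ) 1)) := by
    rw [uIoc_of_le zero_le_one]; infer_instance
  have hint : Integrable (uncurry fun x ω => |G ω x - F x|)
      ((volume.restrict (uIoc 0 1)).prod μ) :=
    .of_bound ((hG.comp measurable_swap).sub (hF.comp measurable_fst)).abs.aestronglyMeasurable 1
      (ae_of_all _ fun ⟨x, ω⟩ => by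
        simpa using abs_sub_le_of_nonneg_of_le (hG01 ω x).1 (hG01 ω x).2 (hF01 x).1 (hF01 x).2)
  change ∫ ω, (∫ x in (0 : ℝ)..1, |G ω x - F x|) ∂μ ≤ c
  rw [← intervalIntegral_integral_swap hint]
  have := intervalIntegral.norm_integral_le_of_norm_le_const (a := 0) (b := 1)
    (f := fun x => ∫ ω, |G ω x - F x| ∂μ) (C := c) fun x _ => by
      rw [Real.norm_eq_abs, abs_of_nonneg (integral_nonneg fun _ => abs_nonneg _)]
      exact hc x
  simp only [Real.norm_eq_abs, sub_zero, abs_one, mul_one] at this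
  exact (le_abs_self _).trans this

end RandomCDF

lemma integral_abs_sub_integral_le_sqrt_variance {Ω : Type*} [MeasurableSpace Ω] {μ : Measure Ω}
    [IsProbabilityMeasure μ] {Y : Ω → ℝ} (hY : MemLp Y 2 μ) :
    ∫ ω, |Y ω - μ[Y]| ∂μ ≤ √Var[Y; μ] := by
  have hZ : MemLp (fun ω => |Y ω - μ[Y]|) 2 μ := (hY.sub (memLp_const _)).abs
  have hvar := variance_nonneg (fun ω => |Y ω - μ[Y]|) μ
  rw [variance_eq_sub hZ] at hvar
  simp only [Pi.pow_apply, sq_abs] at hvar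
  rw [variance_eq_integral hY.aemeasurable]
  exact le_sqrt_of_sq_le (by linarith)

lemma eq_cdf_map {Ω : Type*} [MeasurableSpace Ω] {μ : Measure Ω} [IsProbabilityMeasure μ]
    {Y : Ω → ℝ} (hY : Measurable Y) {F : ℝ → ℝ} (hF : ∀ x, (μ {ω | Y ω ≤ x}).toReal = F x) :
    F = cdf (μ.map Y) := by
  have := Measure.isProbabilityMeasure_map (μ := μ) hY.aemeasurable
  ext x
  rw [cdf_eq_real, map_measureReal_apply hY measurableSet_Iic, ← hF x, measureReal_def]
  rfl

lemma cdf_mem_Icc (ν : Measure ℝ) (x : ℝ) : cdf ν x ∈ Icc (0 : ℝ) 1 :=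
  ⟨cdf_nonneg ν x, cdf_le_one ν x⟩

section ECDF

variable {Ω : Type*} {v : ℕ} {X : Fin v → Ω → ℝ}

lemma ecdfSample_mem_Icc (ω : Ω) (x : ℝ) : ecdfSample v X ω x ∈ Icc (0 : ℝ) 1 := by
  rw [ecdfSample, Finset.sum_boole]
  refine ⟨by positivity, div_le_one_of_le₀ ?_ v.cast_nonneg⟩
  exact_mod_cast (Finset.card_filter_le _ _).trans (Finset.card_fin v).le

variable [MeasurableSpace Ω] {μ : Measure Ω}

lemma measurable_ecdfSample (hX : ∀ q, Measurable (X q)) :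
    Measurable (uncurry (ecdfSample v X)) := by
  refine (Finset.measurable_sum _ fun q _ => ?_).div_const _
  exact Measurable.ite (measurableSet_le ((hX q).comp measurable_fst) measurable_snd)
    measurable_const measurable_const

lemma integral_ecdfSample [IsProbabilityMeasure μ] (hv : 0 < v) (hX : ∀ q, Measurable (X q))
    {x p : ℝ} (hp : ∀ q, (μ {ω | X q ω ≤ x}).toReal = p) :
    ∫ ω, ecdfSample v X ω x ∂μ = p := by
  have hterm : ∀ q, ∫ ω, (if X q ω ≤ x then (1 : ℝ) else 0) ∂μ = p := fun q => by
    rw [← hp q, ← measureReal_def,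
      ← integral_indicator_one (measurableSet_le (hX q) measurable_const)]
    simp [Set.indicator]
  have hint : ∀ q, Integrable (fun ω => if X q ω ≤ x then (1 : ℝ) else 0) μ := fun q =>
    (integrable_const 1).indicator (measurableSet_le (hX q) measurable_const)
  simp only [ecdfSample]
  rw [integral_div, integral_finsetSum _ fun q _ => hint q]
  simp only [hterm, Finset.sum_const, Finset.card_univ, Fintype.card_fin, nsmul_eq_mul]
  field_simp

lemma variance_ecdfSample_le [IsProbabilityMeasure μ] (hX : ∀ q, Measurable (X q))
    (hind : Pairwise fun q r => IndepFun (X q) (X r) μ) (x : ℝ) :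
    Var[fun ω => ecdfSample v X ω x; μ] ≤ (4 * (v : ℝ))⁻¹ := by
  set Y : Fin v → Ω → ℝ := fun q ω => if X q ω ≤ x then 1 else 0
  have hφ : Measurable fun y : ℝ => if y ≤ x then (1 : ℝ) else 0 :=
    Measurable.ite measurableSet_Iic measurable_const measurable_const
  have hY01 : ∀ q ω, Y q ω ∈ Icc (0 : ℝ) 1 := fun q ω => by
    simp only [Y]; split_ifs <;> norm_num
  have hYm : ∀ q, Measurable (Y q) := fun q => hφ.comp (hX q)
  have hsum : (fun ω => ecdfSample v X ω x) = (v : ℝ)⁻¹ • ∑ q, Y q := by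
    ext ω; simp [ecdfSample, Y, Finset.sum_apply, div_eq_inv_mul]
  rw [hsum, variance_smul, IndepFun.variance_sum
    (fun q _ => memLp_of_bounded (ae_of_all _ (hY01 q)) (hYm q).aestronglyMeasurable 2)
    (fun q _ r _ hqr => (hind hqr).comp hφ hφ)]
  calc ((v : ℝ)⁻¹) ^ 2 * ∑ q, Var[Y q; μ] ≤ ((v : ℝ)⁻¹) ^ 2 * ∑ _q : Fin v, ((1 - 0) / 2) ^ 2 := by
        gcongr with q
        exact variance_le_sq_of_bounded (ae_of_all _ (hY01 q)) (hYm q).aemeasurable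
    _ = (4 * (v : ℝ))⁻¹ := by
        rcases eq_or_ne (v : ℝ) 0 with hv | hv
        · simp [hv]
        · simp only [Finset.sum_const, Finset.card_univ, Fintype.card_fin, nsmul_eq_mul]
          field_simp
          ring

lemma integral_abs_ecdfSample_sub_le [IsProbabilityMeasure μ] (hv : 0 < v)
    (hX : ∀ q, Measurable (X q)) (hind : Pairwise fun q r => IndepFun (X q) (X r) μ) {x p : ℝ}
    (hp : ∀ q, (μ {ω | X q ω ≤ x}).toReal = p) :
    ∫ ω, |ecdfSample v X ω x - p| ∂μ ≤ (2 * √v)⁻¹ := by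
  have hL2 : MemLp (fun ω => ecdfSample v X ω x) 2 μ :=
    memLp_of_bounded (ae_of_all _ fun ω => ecdfSample_mem_Icc ω x)
      (measurable_ecdfSample hX).of_uncurry_right.aestronglyMeasurable 2
  calc ∫ ω, |ecdfSample v X ω x - p| ∂μ
      = ∫ ω, |ecdfSample v X ω x - ∫ ω', ecdfSample v X ω' x ∂μ| ∂μ := by
        rw [integral_ecdfSample hv hX hp]
    _ ≤ √Var[fun ω => ecdfSample v X ω x; μ] := integral_abs_sub_integral_le_sqrt_variance hL2
    _ ≤ √(4 * (v : ℝ))⁻¹ := sqrt_le_sqrt (variance_ecdfSample_le hX hind x)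
    _ = (2 * √v)⁻¹ := by
        rw [sqrt_inv, sqrt_mul zero_le_four, show (4 : ℝ) = 2 ^ 2 by norm_num, sqrt_sq zero_le_two]

lemma integral_wassCDF_ecdfSample_le [IsProbabilityMeasure μ] (hv : 0 < v)
    (hX : ∀ q, Measurable (X q)) (hind : Pairwise fun q r => IndepFun (X q) (X r) μ)
    {F : ℝ → ℝ} (hF : ∀ q x, (μ {ω | X q ω ≤ x}).toReal = F x) :
    ∫ ω, wassCDF (ecdfSample v X ω) F ∂μ ≤ (2 * √v)⁻¹ := by
  obtain rfl := eq_cdf_map (hX ⟨0, hv⟩) (hF ⟨0, hv⟩)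
  exact integral_wassCDF_le (measurable_ecdfSample hX) (monotone_cdf _).measurable
    ecdfSample_mem_Icc (cdf_mem_Icc _) fun x => integral_abs_ecdfSample_sub_le hv hX hind (hF · x)

end ECDF

lemma tendsto_inv_two_mul_sqrt_natCast_atTop :
    Tendsto (fun n : ℕ => (2 * √n)⁻¹) atTop (nhds 0) :=
  ((tendsto_sqrt_atTop.comp tendsto_natCast_atTop_atTop).const_mul_atTop two_pos).inv_tendsto_atTop

lemma tendsto_of_abs_sub_le_inv_two_mul_sqrt {ι : Type*} {l : Filter ι} {f : ι → ℝ} {a : ℝ}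
    {v w : ι → ℕ} (hf : ∀ t, |f t - a| ≤ (2 * √(v t))⁻¹ + (2 * √(w t))⁻¹)
    (hvw : Tendsto (fun t => min (v t) (w t)) l atTop) : Tendsto f l (nhds a) := by
  have hrate := (tendsto_inv_two_mul_sqrt_natCast_atTop.comp
    (tendsto_atTop_mono (fun t => min_le_left _ _) hvw)).add
    (tendsto_inv_two_mul_sqrt_natCast_atTop.comp
      (tendsto_atTop_mono (fun t => min_le_right _ _) hvw))
  rw [add_zero] at hrate
  rw [tendsto_iff_norm_sub_tendsto_zero]
  exact squeeze_zero (fun t => norm_nonneg _) hf hrate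

theorem expected_similarity_convergence_general
    (Ω : ℕ → Type) [mΩ : ∀ t, MeasurableSpace (Ω t)]
    (P : ∀ t, Measure (Ω t)) (hP : ∀ t, IsProbabilityMeasure (P t))
    (vi vj : ℕ → ℕ) (hvi : ∀ t, 0 < vi t) (hvj : ∀ t, 0 < vj t)
    (Fi Fj : ℝ → ℝ)
    (Xi : ∀ t, Fin (vi t) → Ω t → ℝ) (Xj : ∀ t, Fin (vj t) → Ω t → ℝ)
    (hmi : ∀ t q, Measurable (Xi t q)) (hmj : ∀ t q, Measurable (Xj t q))
    (hcdfi : ∀ t (q : Fin (vi t)) (x : ℝ), ((P t) {ω | Xi t q ω ≤ x}).toReal = Fi x)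
    (hcdfj : ∀ t (q : Fin (vj t)) (x : ℝ), ((P t) {ω | Xj t q ω ≤ x}).toReal = Fj x)
    (hindep : ∀ t, iIndepFun
      (Sum.elim (fun q => Xi t q) (fun q => Xj t q) : Fin (vi t) ⊕ Fin (vj t) → Ω t → ℝ)
      (P t)) :
    (∀ t,
      |(∫ ω, Real.exp (-(wassCDF (ecdfSample (vi t) (Xi t) ω)
              (ecdfSample (vj t) (Xj t) ω))) ∂(P t)) -
          Real.exp (-(wassCDF Fi Fj))| ≤
        (∫ ω, wassCDF (ecdfSample (vi t) (Xi t) ω) Fi ∂(P t)) +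
          (∫ ω, wassCDF (ecdfSample (vj t) (Xj t) ω) Fj ∂(P t)) ∧
      (∫ ω, wassCDF (ecdfSample (vi t) (Xi t) ω) Fi ∂(P t)) +
          (∫ ω, wassCDF (ecdfSample (vj t) (Xj t) ω) Fj ∂(P t)) ≤
        (2 * Real.sqrt (vi t))⁻¹ + (2 * Real.sqrt (vj t))⁻¹) ∧
    (Tendsto (fun t => min (vi t) (vj t)) atTop atTop →
      Tendsto (fun t => ∫ ω, Real.exp (-(wassCDF (ecdfSample (vi t) (Xi t) ω)
          (ecdfSample (vj t) (Xj t) ω))) ∂(P t)) atTop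
        (nhds (Real.exp (-(wassCDF Fi Fj))))) ∧
    (Fi = Fj → Tendsto (fun t => min (vi t) (vj t)) atTop atTop →
      Tendsto (fun t => ∫ ω, Real.exp (-(wassCDF (ecdfSample (vi t) (Xi t) ω)
          (ecdfSample (vj t) (Xj t) ω))) ∂(P t)) atTop (nhds 1)) := by
  have hFi := eq_cdf_map (μ := P 0) (hmi 0 ⟨0, hvi 0⟩) (hcdfi 0 ⟨0, hvi 0⟩)
  have hFj := eq_cdf_map (μ := P 0) (hmj 0 ⟨0, hvj 0⟩) (hcdfj 0 ⟨0, hvj 0⟩)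
  have bound := fun t =>
    have := hP t
    And.intro
      (abs_integral_exp_neg_wassCDF_sub_le (μ := P t) (measurable_ecdfSample (hmi t))
        (measurable_ecdfSample (hmj t)) (hFi ▸ (monotone_cdf _).measurable)
        (hFj ▸ (monotone_cdf _).measurable) ecdfSample_mem_Icc ecdfSample_mem_Icc
        (hFi ▸ cdf_mem_Icc _) (hFj ▸ cdf_mem_Icc _))
      (add_le_add
        (integral_wassCDF_ecdfSample_le (hvi t) (hmi t)
          (fun q r hqr => (hindep t).indepFun (Sum.inl_injective.ne hqr)) (hcdfi t))
        (integral_wassCDF_ecdfSample_le (hvj t) (hmj t)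
          (fun q r hqr => (hindep t).indepFun (Sum.inr_injective.ne hqr)) (hcdfj t)))
  have conv := fun hmin : Tendsto (fun t => min (vi t) (vj t)) atTop atTop =>
    tendsto_of_abs_sub_le_inv_two_mul_sqrt (fun t => (bound t).1.trans (bound t).2) hmin
  refine ⟨bound, conv, fun hF hmin => ?_⟩
  simpa [hF] using conv hmin

/-- with `S(i,j) = exp(−W(F̂_i, F̂_j))` built from ECDFs of independent
i.i.d. samples of sizes `v_i, v_j` from `F_i, F_j`,
`|E[S(i,j)] − exp(−W(F_i,F_j))| ≤ E[W(F̂_i,F_i)] + E[W(F̂_j,F_j)] ≤ (2√v_i)⁻¹ + (2√v_j)⁻¹`;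
in particular `E[S(i,j)] → exp(−W(F_i,F_j))` as `min(v_i,v_j) → ∞`, and if `F_i = F_j`
then `E[S(i,j)] → 1`.  (The samples are indexed by a parameter `t` along which the sample
sizes may grow.) -/
theorem expected_similarity_convergence
    (Ω : ℕ → Type) [mΩ : ∀ t, MeasurableSpace (Ω t)]
    (P : ∀ t, Measure (Ω t)) (hP : ∀ t, IsProbabilityMeasure (P t))
    (vi vj : ℕ → ℕ) (hvi : ∀ t, 0 < vi t) (hvj : ∀ t, 0 < vj t)
    (Fi Fj : ℝ → ℝ)
    (Xi : ∀ t, Fin (vi t) → Ω t → ℝ) (Xj : ∀ t, Fin (vj t) → Ω t → ℝ)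
    (hmi : ∀ t q, Measurable (Xi t q)) (hmj : ∀ t q, Measurable (Xj t q))
    (hri : ∀ t q, ∀ᵐ ω ∂(P t), Xi t q ω ∈ Set.Icc (0 : ℝ) 1)
    (hrj : ∀ t q, ∀ᵐ ω ∂(P t), Xj t q ω ∈ Set.Icc (0 : ℝ) 1)
    (hcdfi : ∀ t (q : Fin (vi t)) (x : ℝ), ((P t) {ω | Xi t q ω ≤ x}).toReal = Fi x)
    (hcdfj : ∀ t (q : Fin (vj t)) (x : ℝ), ((P t) {ω | Xj t q ω ≤ x}).toReal = Fj x)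
    (hindep : ∀ t, iIndepFun
      (Sum.elim (fun q => Xi t q) (fun q => Xj t q) : Fin (vi t) ⊕ Fin (vj t) → Ω t → ℝ)
      (P t)) :
    (∀ t,
      |(∫ ω, Real.exp (-(wassCDF (ecdfSample (vi t) (Xi t) ω)
              (ecdfSample (vj t) (Xj t) ω))) ∂(P t)) -
          Real.exp (-(wassCDF Fi Fj))| ≤
        (∫ ω, wassCDF (ecdfSample (vi t) (Xi t) ω) Fi ∂(P t)) +
          (∫ ω, wassCDF (ecdfSample (vj t) (Xj t) ω) Fj ∂(P t)) ∧
      (∫ ω, wassCDF (ecdfSample (vi t) (Xi t) ω) Fi ∂(P t)) +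
          (∫ ω, wassCDF (ecdfSample (vj t) (Xj t) ω) Fj ∂(P t)) ≤
        (2 * Real.sqrt (vi t))⁻¹ + (2 * Real.sqrt (vj t))⁻¹) ∧
    (Tendsto (fun t => min (vi t) (vj t)) atTop atTop →
      Tendsto (fun t => ∫ ω, Real.exp (-(wassCDF (ecdfSample (vi t) (Xi t) ω)
          (ecdfSample (vj t) (Xj t) ω))) ∂(P t)) atTop
        (nhds (Real.exp (-(wassCDF Fi Fj))))) ∧
    (Fi = Fj → Tendsto (fun t => min (vi t) (vj t)) atTop atTop →
      Tendsto (fun t => ∫ ω, Real.exp (-(wassCDF (ecdfSample (vi t) (Xi t) ω)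
          (ecdfSample (vj t) (Xj t) ω))) ∂(P t)) atTop (nhds 1)) :=
  expected_similarity_convergence_general Ω (mΩ := mΩ) P hP vi vj hvi hvj Fi Fj Xi Xj hmi hmj hcdfi
    hcdfj hindep
end
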